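/- arXiv:2511.04038 — 8 statements merged into one kernel-verified Lean document; each statement's English description precedes it below -/
import Mathlib

section
/- Let 𝔅 be a bornology on a topological space X with a closed base, and suppose X is 𝔅-Lindelöf. Then X satisfies Ufin(Γ_𝔅, 𝒪) if and only if X satisfies Ufin(𝒪_𝔅, 𝒪). -/
open Set

universe u

def IsBornology {X : Type u} (B : Set (Set X)) : Prop :=
  ⋃₀ B = univ ∧ (∀ b ∈ B, ∀ b' ⊆ b, b' ∈ B) ∧ ∀ b ∈ B, ∀ b' ∈ B, b ∪ b' ∈ B

def HasClosedBase {X : Type u} [TopologicalSpace X] (B : Set (Set X)) : Prop :=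
  ∃ B0 ⊆ B, (∀ b ∈ B0, IsClosed b) ∧ ∀ b ∈ B, ∃ b0 ∈ B0, b ⊆ b0

def HasCompactBase {X : Type u} [TopologicalSpace X] (B : Set (Set X)) : Prop :=
  ∃ B0 ⊆ B, (∀ b ∈ B0, IsCompact b) ∧ ∀ b ∈ B, ∃ b0 ∈ B0, b ⊆ b0

def IsBCover {X : Type u} [TopologicalSpace X] (B U : Set (Set X)) : Prop :=
  (∀ u ∈ U, IsOpen u) ∧ univ ∉ U ∧ ∀ b ∈ B, ∃ u ∈ U, b ⊆ u

def IsGammaBCover {X : Type u} [TopologicalSpace X] (B U : Set (Set X)) : Prop :=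
  U.Infinite ∧ (∀ u ∈ U, IsOpen u ∧ u ≠ univ) ∧ ∀ b ∈ B, {u ∈ U | ¬ b ⊆ u}.Finite

def IsOpenCover {X : Type u} [TopologicalSpace X] (U : Set (Set X)) : Prop :=
  (∀ u ∈ U, IsOpen u) ∧ ⋃₀ U = univ

def IsOmegaCover {X : Type u} [TopologicalSpace X] (U : Set (Set X)) : Prop :=
  (∀ u ∈ U, IsOpen u) ∧ univ ∉ U ∧ ∀ F : Set X, F.Finite → ∃ u ∈ U, F ⊆ u

def IsGammaCover {X : Type u} [TopologicalSpace X] (U : Set (Set X)) : Prop :=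
  U.Infinite ∧ (∀ u ∈ U, IsOpen u) ∧ ∀ x : X, {u ∈ U | x ∉ u}.Finite

def BLindelof {X : Type u} [TopologicalSpace X] (B : Set (Set X)) : Prop :=
  ∀ U, IsBCover B U → ∃ V ⊆ U, V.Countable ∧ IsBCover B V

def S1 {X : Type u} (A C : Set (Set X) → Prop) : Prop :=
  ∀ U : ℕ → Set (Set X), (∀ n, A (U n)) →
    ∃ V : ℕ → Set X, (∀ n, V n ∈ U n) ∧ C (Set.range V)

def Sfin {X : Type u} (A C : Set (Set X) → Prop) : Prop :=
  ∀ U : ℕ → Set (Set X), (∀ n, A (U n)) →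
    ∃ V : ℕ → Set (Set X), (∀ n, (V n).Finite ∧ V n ⊆ U n) ∧ C (⋃ n, V n)

def Ufin {X : Type u} (A C : Set (Set X) → Prop) : Prop :=
  ∀ U : ℕ → Set (Set X), (∀ n, A (U n)) →
    ∃ V : ℕ → Set (Set X), (∀ n, (V n).Finite ∧ V n ⊆ U n) ∧
      ((∃ n, ⋃₀ V n = univ) ∨ C {s | ∃ n, s = ⋃₀ V n})

/-! If no finite subfamily of an open 𝔅-cover `𝒰` covers `X`, enumerate a countable 𝔅-subcover as
`u₀, u₁, …`; the partial unions `u₀ ∪ ⋯ ∪ uₖ` then form a γ_𝔅-cover. A finite selection from these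
partial unions is the union of a finite selection from `𝒰`, so `Ufin(Γ_𝔅, 𝒪)` applied to the
partial-union covers yields `Ufin(𝒪_𝔅, 𝒪)`. The converse holds because every γ_𝔅-cover is an open
𝔅-cover. -/

section

variable {X : Type u} [TopologicalSpace X] {B : Set (Set X)}

lemma IsGammaBCover.isBCover {U : Set (Set X)} (h : IsGammaBCover B U) : IsBCover B U := by
  obtain ⟨hinf, hopen, hcofin⟩ := h
  refine ⟨fun u hu => (hopen u hu).1, fun huniv => (hopen _ huniv).2 rfl, fun b hb => ?_⟩
  obtain ⟨u, hu, hbu⟩ := (hinf.sdiff (hcofin b hb)).nonempty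
  exact ⟨u, hu, not_not.1 fun h => hbu ⟨hu, h⟩⟩

lemma Monotone.exists_forall_le_of_finite_range {α : Type*} [Preorder α] {f : ℕ → α}
    (hf : Monotone f) (hfin : (range f).Finite) : ∃ N, ∀ k, f k ≤ f N := by
  obtain ⟨_, ⟨N, rfl⟩, hmax⟩ := hfin.exists_maximalFor id _ ⟨f 0, mem_range_self 0⟩
  refine ⟨N, fun k => ?_⟩
  rcases le_total k N with h | h
  · exact hf h
  · exact hmax (mem_range_self k) (hf h)

lemma BLindelof.exists_seq_of_isBCover (hL : BLindelof B) (hB : B.Nonempty)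
    {U : Set (Set X)} (hU : IsBCover B U) :
    ∃ f : ℕ → Set X, (∀ i, f i ∈ U) ∧ ∀ b ∈ B, ∃ i, b ⊆ f i := by
  obtain ⟨C, hCU, hCcount, hC⟩ := hL U hU
  obtain ⟨b, hb⟩ := hB
  obtain ⟨f, rfl⟩ := hCcount.exists_eq_range ((hC.2.2 b hb).imp fun _ h => h.1)
  exact ⟨f, fun i => hCU (mem_range_self i), fun b hb => by
    obtain ⟨_, ⟨i, rfl⟩, hbi⟩ := hC.2.2 b hb
    exact ⟨i, hbi⟩⟩

lemma isGammaBCover_range_accumulate (hBX : ⋃₀ B = univ) {f : ℕ → Set X}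
    (hopen : ∀ i, IsOpen (f i)) (hf : ∀ b ∈ B, ∃ i, b ⊆ f i)
    (hproper : ∀ k, accumulate f k ≠ univ) : IsGammaBCover B (range (accumulate f)) := by
  refine ⟨fun hfin => ?_, ?_, fun b hb => ?_⟩
  · obtain ⟨N, hN⟩ := monotone_accumulate.exists_forall_le_of_finite_range hfin
    refine hproper N (eq_univ_of_forall fun x => ?_)
    obtain ⟨b, hb, hxb⟩ := hBX ▸ mem_univ x
    obtain ⟨i, hbi⟩ := hf b hb
    exact hN i (subset_accumulate (hbi hxb))
  · rintro _ ⟨k, rfl⟩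
    exact ⟨isOpen_biUnion fun i _ => hopen i, hproper k⟩
  · obtain ⟨i, hbi⟩ := hf b hb
    refine ((finite_Iio i).image (accumulate f)).subset ?_
    rintro _ ⟨⟨k, rfl⟩, hbk⟩
    refine ⟨k, mem_Iio.2 (not_le.1 fun hik => hbk ?_), rfl⟩
    exact hbi.trans (subset_accumulate.trans (monotone_accumulate hik))

lemma exists_finite_sUnion_image_eq_of_subset_range_accumulate {α : Type*} {f : ℕ → Set α}
    {G : Set (Set α)} (hG : G.Finite) (hGf : G ⊆ range (accumulate f)) :
    ∃ S : Set ℕ, S.Finite ∧ ⋃₀ (f '' S) = ⋃₀ G := by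
  obtain ⟨K, -, hK, rfl⟩ : ∃ K ⊆ univ, K.Finite ∧ accumulate f '' K = G := by
    simpa using (exists_subset_image_finite_and (f := accumulate f) (s := univ)
      (p := (· = G))).1 ⟨G, by simpa using hGf, hG, rfl⟩
  refine ⟨⋃ k ∈ K, Iic k, hK.biUnion fun k _ => finite_Iic k, ?_⟩
  ext x
  simp only [sUnion_image, mem_iUnion, mem_Iic, mem_accumulate, exists_prop]
  constructor
  · rintro ⟨i, ⟨k, hk, hik⟩, hx⟩
    exact ⟨k, hk, i, hik, hx⟩
  · rintro ⟨k, hk, i, hik, hx⟩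
    exact ⟨i, ⟨k, hk, hik⟩, hx⟩

end

theorem stmt6_general {X : Type u} [TopologicalSpace X] (B : Set (Set X)) (hB : IsBornology B)
    (hL : BLindelof B) :
    Ufin (IsGammaBCover B) (IsOpenCover (X := X)) ↔
      Ufin (IsBCover B) (IsOpenCover (X := X)) := by
  refine ⟨fun hGamma U hU => ?_, fun h U hU => h U fun n => (hU n).isBCover⟩
  by_cases hcover : ∃ n, ∃ V ⊆ U n, V.Finite ∧ ⋃₀ V = univ
  · obtain ⟨n, V, hVU, hV, hVX⟩ := hcover
    refine ⟨fun m => if m = n then V else ∅, fun m => ?_, .inl ⟨n, by simpa using hVX⟩⟩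
    by_cases hm : m = n <;> simp [hm, hV, hVU]
  push Not at hcover
  have : Nonempty X := not_isEmpty_iff.1 fun _ =>
    hcover 0 ∅ (empty_subset _) finite_empty (Subsingleton.elim _ _)
  have hBne : B.Nonempty := (nonempty_sUnion.1 (hB.1 ▸ univ_nonempty)).imp fun _ h => h.1
  choose f hfU hf using fun n => hL.exists_seq_of_isBCover hBne (hU n)
  have hproper : ∀ n k, accumulate (f n) k ≠ univ := fun n k => by
    simpa [accumulate_def, sUnion_image] using
      hcover n _ (image_subset_iff.2 fun i _ => hfU n i) ((finite_Iic k).image (f n))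
  obtain ⟨G, hGU, hG⟩ := hGamma _ fun n =>
    isGammaBCover_range_accumulate hB.1 (fun i => (hU n).1 _ (hfU n i)) (hf n) (hproper n)
  choose S hS hSG using fun n =>
    exists_finite_sUnion_image_eq_of_subset_range_accumulate (hGU n).1 (hGU n).2
  refine ⟨fun n => f n '' S n, fun n => ⟨(hS n).image _, image_subset_iff.2 fun i _ => hfU n i⟩, ?_⟩
  simpa only [hSG] using hG

theorem stmt6 {X : Type u} [TopologicalSpace X] (B : Set (Set X)) (hB : IsBornology B)
    (hcb : HasClosedBase B) (hL : BLindelof B) :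
    Ufin (IsGammaBCover B) (IsOpenCover (X := X)) ↔
      Ufin (IsBCover B) (IsOpenCover (X := X)) :=
  stmt6_general B hB hL
end

section
/- Let 𝔅 be a bornology on a topological space X with a closed base, and suppose X is 𝔅-Lindelöf. Then the selection principles S1(𝒪_𝔅, Γ) and Sfin(𝒪_𝔅, Γ) are equivalent for X. -/
/-!
`S1 ⇒ Sfin` by selecting singletons. Conversely, given `𝔅`-covers `𝒰ₙ`, apply `Sfin` to the
`𝔅`-covers of finite intersections `u₀ ∩ ⋯ ∩ uₙ` with `uᵢ ∈ 𝒰ᵢ`. The resulting `γ`-cover is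
infinite while each selected family is finite, so we can pick elements `wₘ` of it, each chosen
outside the families selected at stages `≤ m`. Then every point lies in all but finitely many
`wₘ`, and `wₘ` sits inside its `m`-th factor `vₘ ∈ 𝒰ₘ`, so `{vₘ}` is again a `γ`-cover.
-/

open Set

universe u

theorem exists_seq_fresh_of_iUnion_infinite {α : Type*} {V : ℕ → Set α}
    (hV : ∀ n, (V n).Finite) (hinf : (⋃ n, V n).Infinite) :
    ∃ w : ℕ → α, ∃ k : ℕ → ℕ, (∀ m, m < k m ∧ w m ∈ V (k m)) ∧
      ∀ F ⊆ ⋃ n, V n, F.Finite → {m | w m ∈ F}.Finite := by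
  have hne : ∀ m, ((⋃ n, V n) \ ⋃ n ≤ m, V n).Nonempty := fun m =>
    (hinf.sdiff ((finite_le_nat m).biUnion fun n _ => hV n)).nonempty
  choose w hwV hfresh using hne
  have hlate : ∀ m, ∃ k, m < k ∧ w m ∈ V k := fun m => by
    obtain ⟨k, hk⟩ := mem_iUnion.1 (hwV m)
    exact ⟨k, lt_of_not_ge fun hkm => hfresh m (mem_biUnion hkm hk), hk⟩
  choose k hk using hlate
  refine ⟨w, k, hk, fun F hF hFfin => ?_⟩
  obtain ⟨I, hIfin, hFI⟩ := finite_subset_iUnion hFfin hF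
  obtain ⟨N, hN⟩ := hIfin.bddAbove
  refine (finite_le_nat N).subset fun m hm => (le_of_not_gt fun hNm => hfresh m ?_ : m ≤ N)
  obtain ⟨i, hi, hwi⟩ := mem_iUnion₂.1 (hFI hm)
  exact mem_biUnion ((hN hi).trans hNm.le) hwi

section

variable {X : Type u}

theorem S1.sfin {A C : Set (Set X) → Prop} (h : S1 A C) : Sfin A C := by
  intro U hU
  obtain ⟨V, hVU, hC⟩ := h U hU
  refine ⟨fun n => {V n}, fun n => ⟨finite_singleton _, singleton_subset_iff.2 (hVU n)⟩, ?_⟩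
  rwa [iUnion_singleton_eq_range]

def finiteInterCover (U : ℕ → Set (Set X)) (n : ℕ) : Set (Set X) :=
  {s | ∃ u : ℕ → Set X, (∀ i ≤ n, u i ∈ U i) ∧ s = ⋂ i ≤ n, u i}

theorem exists_superset_of_mem_finiteInterCover {U : ℕ → Set (Set X)} {n i : ℕ} {s : Set X}
    (hs : s ∈ finiteInterCover U n) (hi : i ≤ n) : ∃ t ∈ U i, s ⊆ t := by
  obtain ⟨u, hu, rfl⟩ := hs
  exact ⟨u i, hu i hi, biInter_subset_of_mem hi⟩

variable [TopologicalSpace X]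

theorem isBCover_finiteInterCover {B : Set (Set X)} {U : ℕ → Set (Set X)}
    (hU : ∀ i, IsBCover B (U i)) (n : ℕ) : IsBCover B (finiteInterCover U n) := by
  refine ⟨?_, fun huniv => ?_, fun b hb => ?_⟩
  · rintro _ ⟨u, hu, rfl⟩
    exact (finite_le_nat n).isOpen_biInter fun i hi => (hU i).1 _ (hu i hi)
  · obtain ⟨t, ht, hsub⟩ := exists_superset_of_mem_finiteInterCover huniv (Nat.zero_le n)
    exact (hU 0).2.1 (univ_subset_iff.1 hsub ▸ ht)
  · choose u hu hbu using fun i => (hU i).2.2 b hb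
    exact ⟨⋂ i ≤ n, u i, ⟨u, fun i _ => hu i, rfl⟩, subset_iInter₂ fun i _ => hbu i⟩

theorem isGammaCover_range {v : ℕ → Set X} (hopen : ∀ m, IsOpen (v m)) (hne : ∀ m, v m ≠ univ)
    (hv : ∀ x, {m | x ∉ v m}.Finite) : IsGammaCover (range v) := by
  refine ⟨fun hfin => ?_, forall_mem_range.2 hopen, fun x => ?_⟩
  · -- a finite range would be missed at finitely many points, each missed only finitely often
    have hmiss : ∀ s ∈ range v, ∃ x, x ∉ s := by
      rintro _ ⟨m, rfl⟩
      exact (ne_univ_iff_exists_notMem _).1 (hne m)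
    choose p hp using hmiss
    have hcover : univ ⊆ ⋃ (s) (hs : s ∈ range v), {m | p s hs ∉ v m} := fun m _ =>
      mem_iUnion₂.2 ⟨v m, mem_range_self m, hp _ _⟩
    exact infinite_univ ((hfin.biUnion' fun s hs => hv (p s hs)).subset hcover)
  · refine ((hv x).image v).subset ?_
    rintro _ ⟨⟨m, rfl⟩, hxm⟩
    exact mem_image_of_mem v hxm

theorem S1_of_Sfin {B : Set (Set X)} (h : Sfin (IsBCover B) (IsGammaCover (X := X))) :
    S1 (IsBCover B) (IsGammaCover (X := X)) := by
  intro U hU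
  obtain ⟨V, hV, hW, -, hWx⟩ := h (finiteInterCover U) (isBCover_finiteInterCover hU)
  obtain ⟨w, k, hwk, hwF⟩ := exists_seq_fresh_of_iUnion_infinite (fun n => (hV n).1) hW
  have hwV : ∀ m, w m ∈ ⋃ n, V n := fun m => mem_iUnion_of_mem _ (hwk m).2
  choose v hvU hwv using fun m =>
    exists_superset_of_mem_finiteInterCover ((hV (k m)).2 (hwk m).2) (hwk m).1.le
  refine ⟨v, hvU, isGammaCover_range (fun m => (hU m).1 _ (hvU m))
    (fun m hm => (hU m).2.1 (hm ▸ hvU m)) fun x => ?_⟩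
  exact (hwF _ (sep_subset _ _) (hWx x)).subset fun m hxm => ⟨hwV m, fun hxw => hxm (hwv m hxw)⟩

end

theorem stmt7_general {X : Type u} [TopologicalSpace X] (B : Set (Set X)) :
    S1 (IsBCover B) (IsGammaCover (X := X)) ↔ Sfin (IsBCover B) (IsGammaCover (X := X)) :=
  ⟨S1.sfin, S1_of_Sfin⟩

theorem stmt7 {X : Type u} [TopologicalSpace X] (B : Set (Set X)) (hB : IsBornology B)
    (hcb : HasClosedBase B) (hL : BLindelof B) :
    S1 (IsBCover B) (IsGammaCover (X := X)) ↔ Sfin (IsBCover B) (IsGammaCover (X := X)) :=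
  stmt7_general B
end

section
/- Let 𝔅 be a bornology on the Baire space ω^ω with a compact base. Then ω^ω does not satisfy Ufin(Γ_𝔅, 𝒪_𝔅). Concretely: for the sequence of γ_𝔅-covers 𝒰ₙ = {Uₖⁿ : k ∈ ω} where Uₖⁿ = {f ∈ ω^ω : f(n) ≤ k}, there is no choice of finite 𝒱ₙ ⊆ 𝒰ₙ such that {∪𝒱ₙ : n ∈ ω} is an open 𝔅-cover of ω^ω. -/
open Set

universe u

/-!
For each `n`, the sets `{f | f n ≤ k}` form a γ_𝔅-cover, because a compact subset of `ℕ → ℕ` has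
bounded `n`-th coordinates. Given finitely many of them for each `n`, with indices bounded by `K n`,
the function `n ↦ K n + 1` lies in none of the finite unions; its singleton belongs to `𝔅` and is
therefore not covered.
-/

def coordLE (n k : ℕ) : Set (ℕ → ℕ) := {f | f n ≤ k}

lemma coordLE_injective (n : ℕ) : Function.Injective (coordLE n) := by
  intro k k' h
  have hk : (fun _ => k : ℕ → ℕ) ∈ coordLE n k' := h ▸ le_refl k
  have hk' : (fun _ => k' : ℕ → ℕ) ∈ coordLE n k := h ▸ le_refl k'
  exact le_antisymm hk hk'

lemma coordLE_ne_univ (n k : ℕ) : coordLE n k ≠ univ := by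
  intro h
  have : (fun _ => k + 1 : ℕ → ℕ) ∈ coordLE n k := h ▸ mem_univ _
  exact Nat.not_succ_le_self k this

lemma isOpen_coordLE (n k : ℕ) : IsOpen (coordLE n k) :=
  (isOpen_discrete (Iic k)).preimage (continuous_apply (A := fun _ : ℕ => ℕ) n)

lemma IsCompact.exists_subset_coordLE {K : Set (ℕ → ℕ)} (hK : IsCompact K) (n : ℕ) :
    ∃ k, K ⊆ coordLE n k := by
  obtain ⟨k, hk⟩ := ((hK.image (continuous_apply n)).finite_of_discrete).bddAbove
  exact ⟨k, fun f hf => hk (mem_image_of_mem _ hf)⟩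

lemma isGammaBCover_range_coordLE {B : Set (Set (ℕ → ℕ))} (hc : HasCompactBase B) (n : ℕ) :
    IsGammaBCover B (range (coordLE n)) := by
  obtain ⟨B0, -, hB0c, hbase⟩ := hc
  refine ⟨infinite_range_of_injective (coordLE_injective n), ?_, fun b hb => ?_⟩
  · rintro _ ⟨k, rfl⟩
    exact ⟨isOpen_coordLE n k, coordLE_ne_univ n k⟩
  · obtain ⟨b0, hb0, hbb0⟩ := hbase b hb
    obtain ⟨K, hK⟩ := (hB0c b0 hb0).exists_subset_coordLE n
    refine ((finite_Iio K).image (coordLE n)).subset ?_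
    rintro _ ⟨⟨k, rfl⟩, hnb⟩
    exact ⟨k, mem_Iio.mpr <| not_le.mp fun hKk => hnb fun f hf => le_trans (hK (hbb0 hf)) hKk, rfl⟩

lemma exists_forall_notMem_sUnion_coordLE {V : ℕ → Set (Set (ℕ → ℕ))}
    (hV : ∀ n, (V n).Finite ∧ V n ⊆ range (coordLE n)) :
    ∃ g : ℕ → ℕ, ∀ n, g ∉ ⋃₀ V n := by
  have hfin : ∀ n, (coordLE n ⁻¹' V n).Finite := fun n =>
    (hV n).1.preimage (coordLE_injective n).injOn
  choose K hK using fun n => (hfin n).bddAbove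
  refine ⟨fun n => K n + 1, fun n ⟨_, hs, hg⟩ => ?_⟩
  obtain ⟨k, rfl⟩ := (hV n).2 hs
  exact absurd hg (not_le.mpr (Nat.lt_succ_of_le (hK n hs)))

lemma IsBornology.singleton_mem {X : Type u} {B : Set (Set X)} (hB : IsBornology B) (x : X) :
    {x} ∈ B := by
  obtain ⟨b, hb, hxb⟩ := mem_sUnion.mp (hB.1.symm ▸ mem_univ x)
  exact hB.2.1 b hb {x} (singleton_subset_iff.mpr hxb)

lemma not_isBCover_sUnion_coordLE {B : Set (Set (ℕ → ℕ))} (hB : IsBornology B)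
    {V : ℕ → Set (Set (ℕ → ℕ))} (hV : ∀ n, (V n).Finite ∧ V n ⊆ range (coordLE n)) :
    ¬ IsBCover B {s | ∃ n, s = ⋃₀ V n} := by
  rintro ⟨-, -, hcover⟩
  obtain ⟨g, hg⟩ := exists_forall_notMem_sUnion_coordLE hV
  obtain ⟨_, ⟨n, rfl⟩, hgu⟩ := hcover {g} (hB.singleton_mem g)
  exact hg n (hgu rfl)

theorem stmt8 (B : Set (Set (ℕ → ℕ))) (hB : IsBornology B) (hc : HasCompactBase B) :
    ¬ Ufin (IsGammaBCover B) (IsBCover B) ∧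
    ¬ ∃ V : ℕ → Set (Set (ℕ → ℕ)),
        (∀ n, (V n).Finite ∧ V n ⊆ Set.range fun k => {f : ℕ → ℕ | f n ≤ k}) ∧
        IsBCover B {s | ∃ n, s = ⋃₀ V n} := by
  refine ⟨fun hufin => ?_, fun ⟨V, hV, hcover⟩ => not_isBCover_sUnion_coordLE hB hV hcover⟩
  obtain ⟨V, hV, ⟨n, hunion⟩ | hcover⟩ := hufin _ (isGammaBCover_range_coordLE hc)
  · obtain ⟨g, hg⟩ := exists_forall_notMem_sUnion_coordLE hV
    exact hg n (hunion ▸ mem_univ g)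
  · exact not_isBCover_sUnion_coordLE hB hV hcover
end

section
/- Let 𝔅 be a bornology on a topological space X with a compact base, let n ∈ ω, and let 𝒰 be an open 𝔅ⁿ-cover of Xⁿ. Then there exists an open 𝔅-cover 𝒱 of X such that {Vⁿ : V ∈ 𝒱} is a 𝔅ⁿ-cover of Xⁿ refining 𝒰. -/
/-!
Every `b ∈ 𝔅` lies in a compact `K` of the base, and `Kⁿ` lies in some `u ∈ 𝒰`. Wallace's
theorem, a finite-product tube lemma proved by induction on `n`, gives an open `V ⊇ K` with
`Vⁿ ⊆ u`. These sets `V` form the required cover; none of them is `X`, since then `u = Xⁿ ∈ 𝒰`.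
-/

open Set

universe u

def powSet {X : Type u} (b : Set X) (n : ℕ) : Set (Fin n → X) := {f | ∀ i, f i ∈ b}

def BornPow {X : Type u} (B : Set (Set X)) (n : ℕ) : Set (Set (Fin n → X)) :=
  {s | ∃ b ∈ B, s ⊆ powSet b n}

theorem Fin.cons_mem_univ_pi {n : ℕ} {X : Fin (n + 1) → Type*} {W : ∀ i, Set (X i)} (x : X 0)
    (g : ∀ j : Fin n, X j.succ) :
    (Fin.cons x g : ∀ i, X i) ∈ pi univ W ↔ x ∈ W 0 ∧ g ∈ pi univ fun j : Fin n => W j.succ := by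
  simp [Fin.forall_fin_succ]

theorem exists_isOpen_pi_subset_of_isCompact {n : ℕ} {X : Fin n → Type*}
    [∀ i, TopologicalSpace (X i)] {K : ∀ i, Set (X i)} (hK : ∀ i, IsCompact (K i))
    {U : Set (∀ i, X i)} (hU : IsOpen U) (hKU : pi univ K ⊆ U) :
    ∃ V : ∀ i, Set (X i), (∀ i, IsOpen (V i)) ∧ (∀ i, K i ⊆ V i) ∧ pi univ V ⊆ U := by
  induction n with
  | zero => exact ⟨fun _ => univ, fun _ => isOpen_univ, fun _ => subset_univ _,
      fun f _ => hKU fun i => i.elim0⟩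
  | succ n ih =>
    let U' : Set (X 0 × ∀ j : Fin n, X j.succ) := {p | Fin.cons p.1 p.2 ∈ U}
    have hU' : IsOpen U' := hU.preimage (continuous_fst.finCons continuous_snd)
    have hKU' : K 0 ×ˢ pi univ (fun j : Fin n => K j.succ) ⊆ U' :=
      fun p hp => hKU ((Fin.cons_mem_univ_pi p.1 p.2).2 hp)
    obtain ⟨A, O, hA, hO, hKA, hKO, hAO⟩ :=
      generalized_tube_lemma (hK 0) (isCompact_univ_pi fun j => hK j.succ) hU' hKU'
    obtain ⟨W, hW, hKW, hWO⟩ := ih (fun j => hK j.succ) hO hKO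
    refine ⟨Fin.cons A W, Fin.cases hA hW, Fin.cases hKA hKW, fun f hf => ?_⟩
    have hf' : Fin.cons (f 0) (Fin.tail f) ∈ U :=
      hAO (show (f 0, Fin.tail f) ∈ A ×ˢ O from ⟨hf 0 trivial, hWO fun j _ => hf j.succ trivial⟩)
    rwa [Fin.cons_self_tail] at hf'

lemma powSet_eq_univ_pi {X : Type u} (b : Set X) (n : ℕ) :
    powSet b n = pi univ fun _ : Fin n => b := by
  ext; simp [powSet]

lemma powSet_mono {X : Type u} {a b : Set X} (h : a ⊆ b) (n : ℕ) : powSet a n ⊆ powSet b n :=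
  fun _ hf i => h (hf i)

lemma powSet_univ {X : Type u} (n : ℕ) : powSet (univ : Set X) n = univ := by
  simp [powSet_eq_univ_pi]

lemma isOpen_powSet {X : Type u} [TopologicalSpace X] {b : Set X} (hb : IsOpen b) (n : ℕ) :
    IsOpen (powSet b n) := by
  rw [powSet_eq_univ_pi]; exact isOpen_set_pi finite_univ fun _ _ => hb

theorem exists_isOpen_powSet_subset_of_isCompact {X : Type u} [TopologicalSpace X] {K : Set X}
    (hK : IsCompact K) {n : ℕ} {U : Set (Fin n → X)} (hU : IsOpen U) (hKU : powSet K n ⊆ U) :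
    ∃ V, IsOpen V ∧ K ⊆ V ∧ powSet V n ⊆ U := by
  rw [powSet_eq_univ_pi] at hKU
  obtain ⟨W, hW, hKW, hWU⟩ := exists_isOpen_pi_subset_of_isCompact (fun _ => hK) hU hKU
  refine ⟨⋂ i, W i, isOpen_iInter_of_finite hW, subset_iInter hKW, ?_⟩
  rw [powSet_eq_univ_pi]
  exact (pi_mono fun i _ => iInter_subset W i).trans hWU

lemma ne_univ_of_subset_mem {Y : Type*} {U : Set (Set Y)} (hU : univ ∉ U) {s u : Set Y}
    (hu : u ∈ U) (hs : s ⊆ u) : s ≠ univ := by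
  rintro rfl
  exact hU (univ_subset_iff.mp hs ▸ hu)

theorem exists_isOpen_powSet_subset_mem {X : Type u} [TopologicalSpace X] {B : Set (Set X)}
    (hc : HasCompactBase B) {n : ℕ} {U : Set (Set (Fin n → X))} (hU : IsBCover (BornPow B n) U)
    {b : Set X} (hb : b ∈ B) : ∃ V, IsOpen V ∧ b ⊆ V ∧ ∃ u ∈ U, powSet V n ⊆ u := by
  obtain ⟨B₀, hB₀B, hB₀, hB₀base⟩ := hc
  obtain ⟨K, hKB₀, hbK⟩ := hB₀base b hb
  obtain ⟨u, hu, hKu⟩ := hU.2.2 (powSet K n) ⟨K, hB₀B hKB₀, subset_rfl⟩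
  obtain ⟨V, hV, hKV, hVu⟩ := exists_isOpen_powSet_subset_of_isCompact (hB₀ K hKB₀) (hU.1 u hu) hKu
  exact ⟨V, hV, hbK.trans hKV, u, hu, hVu⟩

theorem stmt10_general {X : Type u} [TopologicalSpace X] (B : Set (Set X))
    (hc : HasCompactBase B) (n : ℕ) (U : Set (Set (Fin n → X)))
    (hU : IsBCover (BornPow B n) U) :
    ∃ V : Set (Set X), IsBCover B V ∧
      IsBCover (BornPow B n) {s | ∃ v ∈ V, s = powSet v n} ∧
      ∀ v ∈ V, ∃ u ∈ U, powSet v n ⊆ u := by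
  choose! V hV hbV u hu hVu using fun b (hb : b ∈ B) => exists_isOpen_powSet_subset_mem hc hU hb
  have hVn_ne : ∀ b ∈ B, powSet (V b) n ≠ univ := fun b hb =>
    ne_univ_of_subset_mem hU.2.1 (hu b hb) (hVu b hb)
  refine ⟨V '' B, ⟨?_, ?_, ?_⟩, ⟨?_, ?_, ?_⟩, ?_⟩
  · rintro _ ⟨b, hb, rfl⟩; exact hV b hb
  · rintro ⟨b, hb, h⟩; exact hVn_ne b hb (by rw [h, powSet_univ])
  · intro b hb; exact ⟨V b, mem_image_of_mem V hb, hbV b hb⟩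
  · rintro _ ⟨_, ⟨b, hb, rfl⟩, rfl⟩; exact isOpen_powSet (hV b hb) n
  · rintro ⟨_, ⟨b, hb, rfl⟩, h⟩; exact hVn_ne b hb h.symm
  · rintro s ⟨b, hb, hs⟩
    exact ⟨_, ⟨V b, mem_image_of_mem V hb, rfl⟩, hs.trans (powSet_mono (hbV b hb) n)⟩
  · rintro _ ⟨b, hb, rfl⟩; exact ⟨u b, hu b hb, hVu b hb⟩

theorem stmt10 {X : Type u} [TopologicalSpace X] (B : Set (Set X)) (hB : IsBornology B)
    (hc : HasCompactBase B) (n : ℕ) (U : Set (Set (Fin n → X)))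
    (hU : IsBCover (BornPow B n) U) :
    ∃ V : Set (Set X), IsBCover B V ∧
      IsBCover (BornPow B n) {s | ∃ v ∈ V, s = powSet v n} ∧
      ∀ v ∈ V, ∃ u ∈ U, powSet v n ⊆ u :=
  stmt10_general B hc n U hU
end

section
/- Let 𝔅 be a bornology on a topological space X with a compact base. Then X satisfies S1(𝒪_𝔅, 𝒪_𝔅) if and only if for every n ∈ ω, Xⁿ satisfies S1(𝒪_{𝔅ⁿ}, 𝒪_{𝔅ⁿ}), where 𝔅ⁿ is the product bornology on Xⁿ generated by {Bⁿ : B ∈ 𝔅}. -/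
open Set

universe u

/-- Wallace-type lemma: if `Kⁿ ⊆ U` with `K` compact and `U` open, there is an open
`V ⊇ K` with `Vⁿ ⊆ U`. -/
lemma wallace {X : Type u} [TopologicalSpace X] {K : Set X} (hK : IsCompact K) (n : ℕ)
    {U : Set (Fin n → X)} (hU : IsOpen U) (hKU : powSet K n ⊆ U) :
    ∃ V : Set X, IsOpen V ∧ K ⊆ V ∧ powSet V n ⊆ U := by
  classical
  have hpow : powSet K n = Set.pi univ (fun _ : Fin n => K) := by
    ext f; simp [powSet, Set.mem_pi]
  have hcomp : IsCompact (powSet K n) := by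
    rw [hpow]; exact isCompact_univ_pi fun _ => hK
  have hbox : ∀ f : powSet K n, ∃ u : Fin n → Set X,
      (∀ i, IsOpen (u i) ∧ (f : Fin n → X) i ∈ u i) ∧ Set.pi univ u ⊆ U := by
    intro f
    exact (isOpen_pi_iff'.mp hU) f (hKU f.2)
  choose u hu hsub using hbox
  have hcover : powSet K n ⊆ ⋃ f : powSet K n, Set.pi univ (u f) := by
    intro g hg
    exact mem_iUnion.mpr ⟨⟨g, hg⟩, fun i _ => (hu ⟨g, hg⟩ i).2⟩
  obtain ⟨t, ht⟩ := hcomp.elim_finite_subcover (fun f : powSet K n => Set.pi univ (u f))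
    (fun f => isOpen_set_pi finite_univ (fun i _ => (hu f i).1)) hcover
  set W : X → Set X := fun x => ⋂ f ∈ t, ⋂ i ∈ {i : Fin n | x ∈ u f i}, u f i with hW
  have hWopen : ∀ x, IsOpen (W x) := by
    intro x
    apply t.finite_toSet.isOpen_biInter
    intro f _
    exact (Set.toFinite _).isOpen_biInter fun i _ => (hu f i).1
  have hxW : ∀ x, x ∈ W x := by
    intro x
    simp only [hW, mem_iInter]
    intro f _ i hi
    exact hi
  refine ⟨⋃ x ∈ K, W x, isOpen_biUnion fun x _ => hWopen x, fun x hx => mem_biUnion hx (hxW x), ?_⟩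
  intro g hg
  have : ∀ i, ∃ x ∈ K, g i ∈ W x := fun i => by
    simpa using (hg i)
  choose x hxK hgW using this
  have hxmem : (x : Fin n → X) ∈ powSet K n := fun i => hxK i
  obtain ⟨f, hft, hxf⟩ := mem_iUnion₂.mp (ht hxmem)
  apply hsub f
  intro i _
  have hxi : x i ∈ u f i := hxf i (mem_univ i)
  have := hgW i
  simp only [hW, mem_iInter] at this
  exact this f hft i hxi

theorem stmt11 {X : Type u} [TopologicalSpace X] (B : Set (Set X)) (hB : IsBornology B)
    (hc : HasCompactBase B) :
    S1 (IsBCover B) (IsBCover B) ↔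
      ∀ n : ℕ, S1 (IsBCover (BornPow B n)) (IsBCover (BornPow B n)) := by
  constructor
  · -- forward direction
    intro h n U hU
    obtain ⟨B0, hB0B, hB0c, hbase⟩ := hc
    set 𝒱 : ℕ → Set (Set X) :=
      fun k => {V | IsOpen V ∧ ∃ u ∈ U k, powSet V n ⊆ u} with h𝒱
    have h𝒱cov : ∀ k, IsBCover B (𝒱 k) := by
      intro k
      refine ⟨fun v hv => hv.1, ?_, ?_⟩
      · rintro ⟨-, u, hu, hsub⟩
        have : u = univ := eq_univ_of_univ_subset (by rw [← powSet_univ n]; exact hsub)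
        exact (hU k).2.1 (this ▸ hu)
      · intro b hb
        obtain ⟨b0, hb0, hbb0⟩ := hbase b hb
        obtain ⟨u, huU, hpsub⟩ := (hU k).2.2 (powSet b0 n) ⟨b0, hB0B hb0, subset_rfl⟩
        obtain ⟨V, hVopen, hb0V, hVsub⟩ := wallace (hB0c b0 hb0) n ((hU k).1 u huU) hpsub
        exact ⟨V, ⟨hVopen, u, huU, hVsub⟩, hbb0.trans hb0V⟩
    obtain ⟨V, hVmem, hVcov⟩ := h 𝒱 h𝒱cov
    choose u huU hpow using fun k => (hVmem k).2
    refine ⟨u, huU, fun v hv => ?_, ?_, ?_⟩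
    · obtain ⟨k, rfl⟩ := hv
      exact (hU k).1 _ (huU k)
    · rintro ⟨k, hk⟩
      exact (hU k).2.1 (hk ▸ huU k)
    · rintro s ⟨b, hb, hs⟩
      obtain ⟨v, ⟨k, rfl⟩, hbv⟩ := hVcov.2.2 b hb
      exact ⟨u k, ⟨k, rfl⟩, hs.trans ((powSet_mono hbv n).trans (hpow k))⟩
  · -- reverse direction: use n = 1
    intro h U hU
    set U' : ℕ → Set (Set (Fin 1 → X)) :=
      fun k => (fun u => {f : Fin 1 → X | f 0 ∈ u}) '' U k with hU'
    have hU'cov : ∀ k, IsBCover (BornPow B 1) (U' k) := by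
      intro k
      refine ⟨?_, ?_, ?_⟩
      · rintro v ⟨w, hw, rfl⟩
        exact ((hU k).1 w hw).preimage (continuous_apply 0)
      · rintro ⟨w, hw, hweq⟩
        have : w = univ := by
          apply eq_univ_of_forall
          intro x
          have hx : (fun _ : Fin 1 => x) ∈ ({f : Fin 1 → X | f 0 ∈ w}) := by
            rw [show ({f : Fin 1 → X | f 0 ∈ w}) = univ from hweq]
            exact mem_univ _
          exact hx
        exact (hU k).2.1 (this ▸ hw)
      · rintro s ⟨b, hb, hs⟩
        obtain ⟨w, hw, hbw⟩ := (hU k).2.2 b hb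
        exact ⟨_, ⟨w, hw, rfl⟩, fun f hf => hbw (hs hf 0)⟩
    obtain ⟨V', hV'mem, hV'cov⟩ := h 1 U' hU'cov
    choose W hWU hWeq using hV'mem
    refine ⟨W, hWU, fun v hv => ?_, ?_, ?_⟩
    · obtain ⟨k, rfl⟩ := hv
      exact (hU k).1 _ (hWU k)
    · rintro ⟨k, hk⟩
      exact (hU k).2.1 (hk ▸ hWU k)
    · intro b hb
      obtain ⟨v, ⟨k, rfl⟩, hbv⟩ := hV'cov.2.2 (powSet b 1) ⟨b, hb, subset_rfl⟩
      refine ⟨W k, ⟨k, rfl⟩, fun x hx => ?_⟩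
      have : (fun _ : Fin 1 => x) ∈ V' k := hbv (fun _ => hx)
      rw [← hWeq k] at this
      exact this
end

section
/- Let 𝔅 be a bornology on a topological space X with a compact base 𝔅₀. If X satisfies Sfin(𝒪_𝔅, 𝒪_𝔅), then no continuous image of X in the Baire space ω^ω is dominating. -/
open Set

universe u

theorem stmt14 {X : Type u} [TopologicalSpace X] (B : Set (Set X)) (hB : IsBornology B)
    (hc : HasCompactBase B) (h : Sfin (IsBCover B) (IsBCover B))
    (ψ : X → (ℕ → ℕ)) (hψ : Continuous ψ) :
    ¬ ∀ g : ℕ → ℕ, ∃ f ∈ Set.range ψ, {n | ¬ g n ≤ f n}.Finite := by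
  intro hdom
  obtain ⟨B0, hB0B, hB0comp, hbase⟩ := hc
  -- singletons belong to B
  have hsing : ∀ x : X, {x} ∈ B := by
    intro x
    have hx : x ∈ ⋃₀ B := hB.1.symm ▸ mem_univ x
    obtain ⟨b, hb, hxb⟩ := hx
    exact hB.2.1 b hb {x} (singleton_subset_iff.2 hxb)
  -- the basic open sets
  set V : ℕ → ℕ → Set X := fun n m => {x | ψ x n < m} with hV
  have hVopen : ∀ n m, IsOpen (V n m) := by
    intro n m
    have : V n m = (fun x => ψ x n) ⁻¹' (Set.Iio m) := rfl
    rw [this]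
    exact (isOpen_discrete _).preimage ((continuous_apply n).comp hψ)
  -- every member of B is bounded at every coordinate
  have hbd : ∀ b ∈ B, ∀ n : ℕ, ∃ m, b ⊆ V n m := by
    intro b hb n
    obtain ⟨b0, hb0, hbb0⟩ := hbase b hb
    have hcomp := hB0comp b0 hb0
    have himg : ((fun x => ψ x n) '' b0).Finite :=
      (hcomp.image ((continuous_apply n).comp hψ)).finite_of_discrete
    obtain ⟨M, hM⟩ := himg.bddAbove
    refine ⟨M + 1, fun x hx => ?_⟩
    have : ψ x n ≤ M := hM ⟨x, hbb0 hx, rfl⟩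
    simpa [hV] using Nat.lt_succ_of_le this
  -- "unbounded coordinate" predicate
  set T : Set ℕ := {n | ∀ m, ∃ x : X, m ≤ ψ x n} with hT
  have hcov : ∀ n ∈ T, IsBCover B (Set.range (V n)) := by
    intro n hn
    refine ⟨fun u hu => ?_, ?_, fun b hb => ?_⟩
    · obtain ⟨m, rfl⟩ := hu; exact hVopen n m
    · rintro ⟨m, hm⟩
      obtain ⟨x, hx⟩ := hn m
      have : x ∈ V n m := hm.symm ▸ mem_univ x
      exact absurd this (by simp [hV]; exact hx)
    · obtain ⟨m, hm⟩ := hbd b hb n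
      exact ⟨V n m, mem_range_self m, hm⟩
  by_cases hTinf : T.Infinite
  · -- infinitely many unbounded coordinates
    set eT : ℕ ↪ ↑T := Set.Infinite.natEmbedding T hTinf with heT
    set N : ℕ → ℕ → ℕ := fun i j => (eT (Nat.pair i j) : ℕ) with hN
    have hNinj : ∀ i j i' j', N i j = N i' j' → i = i' ∧ j = j' := by
      intro i j i' j' hEq
      have : eT (Nat.pair i j) = eT (Nat.pair i' j') := Subtype.ext hEq
      exact Nat.pair_eq_pair.1 (eT.injective this)
    have hNT : ∀ i j, N i j ∈ T := fun i j => (eT (Nat.pair i j)).2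
    have hsel : ∀ i, ∃ W : ℕ → Set (Set X),
        (∀ j, (W j).Finite ∧ W j ⊆ Set.range (V (N i j))) ∧ IsBCover B (⋃ j, W j) :=
      fun i => h (fun j => Set.range (V (N i j))) (fun j => hcov _ (hNT i j))
    choose W hWfin hWcov using hsel
    -- per-(i,j) bounds
    have hMex : ∀ i j, ∃ M, ∀ v ∈ W i j, v ⊆ V (N i j) M := by
      intro i j
      classical
      set f : Set X → ℕ := fun v => if hv : ∃ m, v = V (N i j) m then hv.choose else 0 with hf
      have hfv : ∀ v ∈ W i j, v = V (N i j) (f v) := by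
        intro v hv
        obtain ⟨m, hm⟩ := (hWfin i j).2 hv
        have hex : ∃ m, v = V (N i j) m := ⟨m, hm.symm⟩
        simp only [hf, dif_pos hex]
        exact hex.choose_spec
      obtain ⟨M, hM⟩ := ((hWfin i j).1.image f).bddAbove
      refine ⟨M, fun v hv x hx => ?_⟩
      have h1 : x ∈ V (N i j) (f v) := (hfv v hv) ▸ hx
      have h2 : f v ≤ M := hM ⟨v, hv, rfl⟩
      exact lt_of_lt_of_le h1 h2
    choose M hM using hMex
    classical
    set g : ℕ → ℕ := fun n =>
      if hn : ∃ p : ℕ × ℕ, n = N p.1 p.2 then M hn.choose.1 hn.choose.2 + 1 else 0 with hg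
    have hgN : ∀ i j, g (N i j) = M i j + 1 := by
      intro i j
      have hex : ∃ p : ℕ × ℕ, N i j = N p.1 p.2 := ⟨(i, j), rfl⟩
      have hps := hex.choose_spec
      obtain ⟨hi, hj⟩ := hNinj _ _ _ _ hps.symm
      simp only [hg, dif_pos hex, hi, hj]
    obtain ⟨f, ⟨x, rfl⟩, hfin⟩ := hdom g
    -- for each i, some coordinate in column i is a violation
    have hkey : ∀ i, ∃ j, ¬ g (N i j) ≤ ψ x (N i j) := by
      intro i
      obtain ⟨u, hu, hxu⟩ := (hWcov i).2.2 {x} (hsing x)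
      obtain ⟨j, hj⟩ := mem_iUnion.1 hu
      have hxV : x ∈ V (N i j) (M i j) := hM i j u hj (hxu rfl)
      refine ⟨j, ?_⟩
      rw [hgN i j]
      have : ψ x (N i j) < M i j := hxV
      omega
    choose jj hjj using hkey
    have : {n | ¬ g n ≤ ψ x n}.Infinite := by
      refine Set.infinite_of_injective_forall_mem (f := fun i => N i (jj i)) ?_ hjj
      intro i i' hii
      exact (hNinj _ _ _ _ hii).1
    exact this hfin
  · -- only finitely many unbounded coordinates
    rw [Set.not_infinite] at hTinf
    classical
    have hTc : ∀ n ∉ T, ∃ m, ∀ x : X, ψ x n < m := by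
      intro n hn
      simp only [hT, mem_setOf_eq, not_forall, not_exists, not_le] at hn
      exact hn
    set g : ℕ → ℕ := fun n => if hn : n ∉ T then (hTc n hn).choose else 0 with hg
    obtain ⟨f, ⟨x, rfl⟩, hfin⟩ := hdom g
    have hsub : Tᶜ ⊆ {n | ¬ g n ≤ ψ x n} := by
      intro n hn
      have hn' : n ∉ T := hn
      have hlt : ψ x n < g n := by
        have hgn : g n = (hTc n hn').choose := dif_pos hn'
        rw [hgn]
        exact (hTc n hn').choose_spec x
      simp only [mem_setOf_eq, not_le]
      exact hlt
    exact hTinf.infinite_compl (hfin.subset hsub)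
end

section
/- Let 𝔅 be a bornology on a topological space X with a closed base 𝔅₀, and suppose X is 𝔅-Lindelöf. If |𝔅₀| < 𝔡 (the dominating number), then X satisfies Sfin(𝒪_𝔅, 𝒪_𝔅). -/
open Set

universe u

noncomputable def domNum : Cardinal :=
  sInf {c | ∃ D : Set (ℕ → ℕ), Cardinal.mk D = c ∧
    ∀ g : ℕ → ℕ, ∃ f ∈ D, {n | ¬ g n ≤ f n}.Finite}

lemma not_dominating_aux {α : Type u} (s : Set α) (F : s → ℕ → ℕ)
    (h : Cardinal.mk s < Cardinal.lift.{u} domNum) :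
    ∃ g : ℕ → ℕ, ∀ b : s, {n | ¬ g n ≤ F b n}.Infinite := by
  by_contra hcon
  push_neg at hcon
  have hdom : ∀ g : ℕ → ℕ, ∃ f ∈ Set.range F, {n | ¬ g n ≤ f n}.Finite := by
    intro g
    obtain ⟨b, hb⟩ := hcon g
    exact ⟨F b, ⟨b, rfl⟩, Set.not_infinite.mp (by simpa using hb)⟩
  have h1 : domNum ≤ Cardinal.mk (Set.range F) := csInf_le' ⟨Set.range F, rfl, hdom⟩
  have h2 : Cardinal.lift.{u} (Cardinal.mk (Set.range F)) ≤ Cardinal.lift.{0} (Cardinal.mk s) :=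
    Cardinal.mk_range_le_lift
  rw [Cardinal.lift_id'] at h2
  exact absurd (lt_of_le_of_lt (le_trans (Cardinal.lift_le.mpr h1) h2) h) (lt_irrefl _)

theorem stmt15 {X : Type u} [TopologicalSpace X] (B B0 : Set (Set X)) (hB : IsBornology B)
    (hsub : B0 ⊆ B) (hcl : ∀ b ∈ B0, IsClosed b) (hcof : ∀ b ∈ B, ∃ b0 ∈ B0, b ⊆ b0)
    (hL : BLindelof B) (hcard : Cardinal.mk B0 < Cardinal.lift.{u} domNum) :
    Sfin (IsBCover B) (IsBCover B) := by
  intro U hU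
  choose W hWsub hWc hWcov using fun n => hL (U n) (hU n)
  rcases Set.eq_empty_or_nonempty B0 with hB0 | hB0
  · refine ⟨fun _ => ∅, fun n => ⟨Set.finite_empty, Set.empty_subset _⟩, ?_, ?_, ?_⟩
    · intro u hu; simp at hu
    · simp
    · intro b hb
      obtain ⟨b0, hb0, _⟩ := hcof b hb
      rw [hB0] at hb0; exact absurd hb0 (Set.notMem_empty _)
  · obtain ⟨c0, hc0⟩ := hB0
    have hWne : ∀ n, (W n).Nonempty := by
      intro n
      obtain ⟨w, hw, _⟩ := (hWcov n).2.2 c0 (hsub hc0)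
      exact ⟨w, hw⟩
    choose u hu using fun n => Set.Countable.exists_eq_range (hWc n) (hWne n)
    have hf : ∀ (b : B0) (n : ℕ), ∃ k, (b : Set X) ⊆ u n k := by
      intro b n
      obtain ⟨w, hw, hbw⟩ := (hWcov n).2.2 b (hsub b.2)
      rw [hu n] at hw
      obtain ⟨k, rfl⟩ := hw
      exact ⟨k, hbw⟩
    choose f hfspec using hf
    obtain ⟨g, hg⟩ := not_dominating_aux B0 f hcard
    refine ⟨fun n => (u n) '' {k | k < g n}, ?_, ?_, ?_, ?_⟩
    · intro n
      constructor
      · exact Set.Finite.image _ (Set.finite_lt_nat _)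
      · intro v hv
        obtain ⟨k, _, rfl⟩ := hv
        exact hWsub n (by rw [hu n]; exact ⟨k, rfl⟩)
    · intro v hv
      obtain ⟨n, ⟨k, _, rfl⟩⟩ := Set.mem_iUnion.mp hv
      exact (hU n).1 _ (hWsub n (by rw [hu n]; exact ⟨k, rfl⟩))
    · intro hmem
      obtain ⟨n, ⟨k, _, heq⟩⟩ := Set.mem_iUnion.mp hmem
      exact (hU n).2.1 (heq ▸ hWsub n (by rw [hu n]; exact ⟨k, rfl⟩))
    · intro b hb
      obtain ⟨b0, hb0, hbb0⟩ := hcof b hb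
      obtain ⟨n, hn⟩ := (hg ⟨b0, hb0⟩).nonempty
      refine ⟨u n (f ⟨b0, hb0⟩ n), Set.mem_iUnion.mpr ⟨n, ⟨_, Nat.lt_of_not_le hn, rfl⟩⟩, ?_⟩
      exact hbb0.trans (hfspec ⟨b0, hb0⟩ n)
end

section
/- Let 𝔅 be a bornology on a topological space X with a closed base 𝔅₀. If |𝔅₀| < 𝔟 (the unbounding number), then X satisfies S1(Γ_𝔅, Γ_𝔅): from each sequence of γ_𝔅-covers one can select a single member from each so that the resulting family is a γ_𝔅-cover. -/
open Set

universe u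

noncomputable def unbNum : Cardinal :=
  sInf {c | ∃ A : Set (ℕ → ℕ), Cardinal.mk A = c ∧
    ∀ g : ℕ → ℕ, ∃ f ∈ A, ¬ {n | ¬ f n ≤ g n}.Finite}

theorem stmt16 {X : Type u} [TopologicalSpace X] (B B0 : Set (Set X)) (hB : IsBornology B)
    (hsub : B0 ⊆ B) (hcl : ∀ b ∈ B0, IsClosed b) (hcof : ∀ b ∈ B, ∃ b0 ∈ B0, b ⊆ b0)
    (hcard : Cardinal.mk B0 < Cardinal.lift.{u} unbNum) :
    S1 (IsGammaBCover B) (IsGammaBCover B) := by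
  intro U hU
  -- enumerations
  have hinf : ∀ n, (U n).Infinite := fun n => (hU n).1
  let e : ∀ n, ℕ ↪ ↥(U n) := fun n => (hinf n).natEmbedding
  have einj : ∀ n, Function.Injective (fun j => ((e n j : Set X))) := by
    intro n j k h
    exact (e n).injective (Subtype.ext h)
  -- the functions f_b
  let F : Set X → ℕ → ℕ := fun b n => sInf {N | ∀ j, N ≤ j → b ⊆ (e n j : Set X)}
  have hFspec : ∀ b ∈ B0, ∀ n, ∀ j, F b n ≤ j → b ⊆ (e n j : Set X) := by
    intro b hb n
    have hfin : {j : ℕ | ¬ b ⊆ (e n j : Set X)}.Finite := by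
      have h1 : {u ∈ U n | ¬ b ⊆ u}.Finite := (hU n).2.2 b (hsub hb)
      have : {j : ℕ | ¬ b ⊆ (e n j : Set X)} =
          (fun j => ((e n j : Set X))) ⁻¹' {u ∈ U n | ¬ b ⊆ u} := by
        ext j
        simp only [mem_setOf_eq, mem_preimage, mem_sep_iff]
        exact ⟨fun h => ⟨(e n j).2, h⟩, fun h => h.2⟩
      rw [this]
      exact h1.preimage (Function.Injective.injOn (einj n))
    obtain ⟨M, hM⟩ := hfin.bddAbove
    have hne : (M + 1) ∈ {N | ∀ j, N ≤ j → b ⊆ (e n j : Set X)} := by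
      intro j hj
      by_contra hc
      exact absurd (hM hc) (by omega)
    exact Nat.sInf_mem ⟨_, hne⟩
  -- bound the family F '' B0
  obtain ⟨g, hg⟩ : ∃ g : ℕ → ℕ, ∀ f ∈ F '' B0, {n | ¬ f n ≤ g n}.Finite := by
    by_contra hc
    push_neg at hc
    have hmem : Cardinal.mk ↥(F '' B0) ∈ {c | ∃ A : Set (ℕ → ℕ), Cardinal.mk A = c ∧
        ∀ g : ℕ → ℕ, ∃ f ∈ A, ¬ {n | ¬ f n ≤ g n}.Finite} := by
      refine ⟨F '' B0, rfl, fun g => ?_⟩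
      obtain ⟨f, hf, hfin⟩ := hc g
      exact ⟨f, hf, by simpa [not_le] using hfin⟩
    have h1 : unbNum ≤ Cardinal.mk ↥(F '' B0) := csInf_le' hmem
    have h2 : Cardinal.lift.{u} (Cardinal.mk ↥(F '' B0)) ≤ Cardinal.lift.{0} (Cardinal.mk ↥B0) :=
      Cardinal.mk_image_le_lift
    rw [Cardinal.lift_id'] at h2
    have := lt_of_le_of_lt h2 hcard
    rw [Cardinal.lift_lt] at this
    exact absurd h1 (not_le.mpr this)
  -- choice function avoiding finite sets
  have hC : ∀ (s : Finset (Set X)) (n : ℕ), ∃ u, u ∈ U n ∧ u ∉ s ∧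
      ∀ b ∈ B0, F b n ≤ g n → b ⊆ u := by
    intro s n
    have hpre : {j : ℕ | (e n j : Set X) ∈ s}.Finite :=
      (s.finite_toSet).preimage (Function.Injective.injOn (einj n))
    obtain ⟨M, hM⟩ := hpre.bddAbove
    refine ⟨(e n (max (M + 1) (g n)) : Set X), (e n _).2, ?_, ?_⟩
    · intro hmem
      have := hM hmem
      omega
    · intro b hb hble
      exact hFspec b hb n _ (le_trans hble (le_max_right _ _))
  classical
  choose C hC1 hC2 hC3 using hC
  -- recursive construction
  let prev : ℕ → Finset (Set X) := fun n => Nat.rec ∅ (fun m s => insert (C s m) s) n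
  let V : ℕ → Set X := fun n => C (prev n) n
  have hprevmono : ∀ n m, m ≤ n → prev m ⊆ prev n := by
    intro n
    induction n with
    | zero =>
      intro m h
      have : m = 0 := Nat.le_zero.mp h
      subst this; exact subset_refl _
    | succ k ih =>
      intro m h
      rcases Nat.lt_or_ge m (k+1) with h' | h'
      · exact (ih m (by omega)).trans (Finset.subset_insert _ _)
      · have : m = k + 1 := by omega
        subst this; exact subset_refl _
  have hVmem : ∀ m n, m < n → V m ∈ prev n := by
    intro m n h
    have : V m ∈ prev (m + 1) := Finset.mem_insert_self _ _
    exact hprevmono n (m+1) h this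
  have hVinj : Function.Injective V := by
    intro m n h
    by_contra hne
    rcases Nat.lt_or_ge m n with h' | h'
    · have hm := hVmem m n h'
      rw [h] at hm
      exact hC2 (prev n) n hm
    · have h'' : n < m := by omega
      have hm := hVmem n m h''
      rw [← h] at hm
      exact hC2 (prev m) m hm
  refine ⟨V, fun n => hC1 _ _, ?_, ?_, ?_⟩
  · exact Set.infinite_range_of_injective hVinj
  · rintro u ⟨n, rfl⟩
    exact (hU n).2.1 _ (hC1 _ _)
  · intro b hb
    obtain ⟨b0, hb0, hbb0⟩ : ∃ b0 ∈ B0, b ⊆ b0 := hcof b hb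
    have hT : {n | ¬ F b0 n ≤ g n}.Finite := hg _ ⟨b0, hb0, rfl⟩
    have : {u ∈ Set.range V | ¬ b ⊆ u} ⊆ V '' {n | ¬ F b0 n ≤ g n} := by
      rintro u ⟨⟨n, rfl⟩, hnb⟩
      refine ⟨n, ?_, rfl⟩
      intro hle
      exact hnb (hbb0.trans (hC3 (prev n) n b0 hb0 hle))
    exact (hT.image V).subset this
end
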